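/- If the ideal a of A is idempotent (a = a²), then every A-module is both a-reduced and a-coreduced; consequently an A-module is a-adically complete if and only if it is annihilated by a, if and only if it is a-torsion and annihilated by a. -/
import Mathlib


/-- `M` is `a`-reduced (ideal version): `a² • m = 0` implies `a • m = 0`. -/
def IsAReduced {A : Type*} [CommRing A] (a : Ideal A)
    (M : Type*) [AddCommGroup M] [Module A M] : Prop :=
  ∀ m : M, (∀ x ∈ a ^ 2, x • m = 0) → ∀ x ∈ a, x • m = 0

/-- `M` is `a`-coreduced: `aM = a²M`. -/
def IsACoreduced {A : Type*} [CommRing A] (a : Ideal A)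
    (M : Type*) [AddCommGroup M] [Module A M] : Prop :=
  a • (⊤ : Submodule A M) = (a ^ 2) • (⊤ : Submodule A M)

/-- `M` is `a`-torsion: every element is annihilated by some power of `a`. -/
def IsATorsion {A : Type*} [CommRing A] (a : Ideal A)
    (M : Type*) [AddCommGroup M] [Module A M] : Prop :=
  ∀ m : M, ∃ k : ℕ, ∀ x ∈ a ^ (k + 1), x • m = 0

lemma idem_pow {A : Type*} [CommRing A] (a : Ideal A) (ha : a = a ^ 2) :
    ∀ k : ℕ, a ^ (k + 1) = a := by
  intro k
  induction k with
  | zero => simp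
  | succ n ih =>
    rw [pow_succ, ih, ← pow_two, ← ha]

theorem stmt17 {A : Type*} [CommRing A] (a : Ideal A) (ha : a = a ^ 2)
    (M : Type*) [AddCommGroup M] [Module A M] :
    (IsAReduced a M ∧ IsACoreduced a M) ∧
    (IsAdicComplete a M ↔ a • (⊤ : Submodule A M) = ⊥) ∧
    (IsAdicComplete a M ↔ (IsATorsion a M ∧ a • (⊤ : Submodule A M) = ⊥)) := by
  have hpow := idem_pow a ha
  have key : IsAdicComplete a M ↔ a • (⊤ : Submodule A M) = ⊥ := by
    constructor
    · intro h
      rw [eq_bot_iff]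
      intro m hm
      have hh := h.haus'
      have : m = 0 := by
        refine hh m ?_
        intro n
        rw [SModEq.zero]
        cases n with
        | zero => simp
        | succ k => rw [hpow k]; exact hm
      simp [this]
    · intro h
      refine { toIsHausdorff := ⟨?_⟩, toIsPrecomplete := ⟨?_⟩ }
      · intro m hm
        have := hm 1
        rw [SModEq.zero, pow_one, h] at this
        simpa using this
      · intro f hf
        refine ⟨f 1, fun n => ?_⟩
        cases n with
        | zero =>
          rw [pow_zero, Ideal.one_eq_top, Submodule.top_smul]
          exact SModEq.top
        | succ k =>
          have h1 : f 1 ≡ f (k + 1) [SMOD (a ^ 1 • ⊤ : Submodule A M)] :=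
            hf (Nat.le_add_left 1 k)
          rw [pow_one, h] at h1
          have : f 1 = f (k + 1) := by
            have := SModEq.sub_mem.mp h1
            simpa [sub_eq_zero] using this
          rw [this]
  refine ⟨⟨?_, ?_⟩, key, ?_⟩
  · intro m hm x hx
    exact hm x (ha ▸ hx)
  · show a • (⊤ : Submodule A M) = (a ^ 2) • ⊤
    rw [← ha]
  · rw [key]
    constructor
    · intro h
      refine ⟨fun m => ⟨0, fun x hx => ?_⟩, h⟩
      rw [pow_one] at hx
      have : x • m ∈ a • (⊤ : Submodule A M) :=
        Submodule.smul_mem_smul hx trivial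
      rw [h] at this
      simpa using this
    · exact fun h => h.2
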